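/- Let Ω : ℝ^D → ℝ be a convex function, A a real k×D matrix, y ∈ Δ^D, and η ∈ ℝ^k. Let y* ∈ Δ^D be a maximizer over Δ^D of f_Ω(y') := ηᵀAy' − Ω(y'). Then the vector A(y* − y) ∈ ℝ^k is a subgradient at η of the convex function η' ↦ ℓ_{Ω,A}(η', y) = Ω△*(Aᵀη') + Ω(y) − η'ᵀAy; that is, for all η' ∈ ℝ^k, ℓ_{Ω,A}(η', y) ≥ ℓ_{Ω,A}(η, y) + (A(y* − y))ᵀ(η' − η). -/

import Mathlib

/-
Since `ℓ_{Ω,A}(·, y)` is `Ω△* ∘ Aᵀ` plus an affine function, it suffices that `y*` is a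
subgradient of `Ω△*` at `Aᵀη`. This is the Fenchel–Young inequality at `Aᵀη'`, evaluated at
the point `y*` that attains the supremum defining `Ω△*(Aᵀη)`. A convex `Ω` on `ℝ^D` is
continuous, so the supremum over the compact simplex is finite.
-/

open Matrix Set

/-- Fenchel conjugate of the restriction of `Ω` to the standard simplex. -/
noncomputable def fenchelConjSimplex {D : ℕ} (Ω : (Fin D → ℝ) → ℝ)
    (θ : Fin D → ℝ) : ℝ :=
  sSup ((fun y => θ ⬝ᵥ y - Ω y) '' stdSimplex ℝ (Fin D))

section FenchelConjSimplex

variable {D : ℕ} {Ω : (Fin D → ℝ) → ℝ}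

lemma bddAbove_fenchelConjSimplex_image (hΩ : ConvexOn ℝ univ Ω) (θ : Fin D → ℝ) :
    BddAbove ((fun y => θ ⬝ᵥ y - Ω y) '' stdSimplex ℝ (Fin D)) := by
  have hΩc : Continuous Ω := continuousOn_univ.1 (hΩ.continuousOn isOpen_univ)
  exact (isCompact_stdSimplex ℝ (Fin D)).bddAbove_image
    ((continuous_const.dotProduct continuous_id).sub hΩc).continuousOn

lemma le_fenchelConjSimplex (hΩ : ConvexOn ℝ univ Ω) (θ : Fin D → ℝ) {y : Fin D → ℝ}
    (hy : y ∈ stdSimplex ℝ (Fin D)) : θ ⬝ᵥ y - Ω y ≤ fenchelConjSimplex Ω θ :=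
  le_csSup (bddAbove_fenchelConjSimplex_image hΩ θ) ⟨y, hy, rfl⟩

lemma fenchelConjSimplex_eq_of_isMaxOn {θ ystar : Fin D → ℝ}
    (hystar : ystar ∈ stdSimplex ℝ (Fin D))
    (hmax : IsMaxOn (fun y => θ ⬝ᵥ y - Ω y) (stdSimplex ℝ (Fin D)) ystar) :
    fenchelConjSimplex Ω θ = θ ⬝ᵥ ystar - Ω ystar :=
  IsGreatest.csSup_eq ⟨mem_image_of_mem _ hystar, forall_mem_image.2 hmax⟩

lemma fenchelConjSimplex_add_dotProduct_le (hΩ : ConvexOn ℝ univ Ω) {θ ystar : Fin D → ℝ}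
    (hystar : ystar ∈ stdSimplex ℝ (Fin D))
    (hmax : IsMaxOn (fun y => θ ⬝ᵥ y - Ω y) (stdSimplex ℝ (Fin D)) ystar) (θ' : Fin D → ℝ) :
    fenchelConjSimplex Ω θ + (θ' - θ) ⬝ᵥ ystar ≤ fenchelConjSimplex Ω θ' := by
  rw [fenchelConjSimplex_eq_of_isMaxOn hystar hmax, sub_dotProduct]
  linarith [le_fenchelConjSimplex hΩ θ' hystar]

end FenchelConjSimplex

theorem fenchelYoung_loss_subgradient_general {D k : ℕ} (Ω : (Fin D → ℝ) → ℝ)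
    (hΩ : ConvexOn ℝ Set.univ Ω) (A : Matrix (Fin k) (Fin D) ℝ)
    (y : Fin D → ℝ) (η : Fin k → ℝ)
    (ystar : Fin D → ℝ) (hystar : ystar ∈ stdSimplex ℝ (Fin D))
    (hmax : ∀ y' ∈ stdSimplex ℝ (Fin D),
      η ⬝ᵥ (A *ᵥ y') - Ω y' ≤ η ⬝ᵥ (A *ᵥ ystar) - Ω ystar) :
    ∀ η' : Fin k → ℝ,
      fenchelConjSimplex Ω (η' ᵥ* A) + Ω y - η' ⬝ᵥ (A *ᵥ y) ≥
        (fenchelConjSimplex Ω (η ᵥ* A) + Ω y - η ⬝ᵥ (A *ᵥ y)) +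
          (A *ᵥ (ystar - y)) ⬝ᵥ (η' - η) := by
  intro η'
  have hmax' : IsMaxOn (fun y' => (η ᵥ* A) ⬝ᵥ y' - Ω y') (stdSimplex ℝ (Fin D)) ystar :=
    isMaxOn_iff.2 fun y' hy' => by simpa only [dotProduct_mulVec] using hmax y' hy'
  have hsub := fenchelConjSimplex_add_dotProduct_le hΩ hystar hmax' (η' ᵥ* A)
  have hlin : (A *ᵥ (ystar - y)) ⬝ᵥ (η' - η) = (η' ᵥ* A - η ᵥ* A) ⬝ᵥ (ystar - y) := by
    rw [dotProduct_comm, dotProduct_mulVec, sub_vecMul]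
  rw [hlin, dotProduct_sub, dotProduct_mulVec η', dotProduct_mulVec η]
  linarith [sub_dotProduct (η' ᵥ* A) (η ᵥ* A) y]

/-- If `y* ∈ Δ^D` maximizes `f_Ω(y') = ηᵀAy' − Ω(y')` over the simplex, then
`A(y* − y)` is a subgradient at `η` of the convex map `η' ↦ ℓ_{Ω,A}(η', y)`. -/
theorem fenchelYoung_loss_subgradient {D k : ℕ} (Ω : (Fin D → ℝ) → ℝ)
    (hΩ : ConvexOn ℝ Set.univ Ω) (A : Matrix (Fin k) (Fin D) ℝ)
    (y : Fin D → ℝ) (hy : y ∈ stdSimplex ℝ (Fin D)) (η : Fin k → ℝ)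
    (ystar : Fin D → ℝ) (hystar : ystar ∈ stdSimplex ℝ (Fin D))
    (hmax : ∀ y' ∈ stdSimplex ℝ (Fin D),
      η ⬝ᵥ (A *ᵥ y') - Ω y' ≤ η ⬝ᵥ (A *ᵥ ystar) - Ω ystar) :
    ∀ η' : Fin k → ℝ,
      fenchelConjSimplex Ω (η' ᵥ* A) + Ω y - η' ⬝ᵥ (A *ᵥ y) ≥
        (fenchelConjSimplex Ω (η ᵥ* A) + Ω y - η ⬝ᵥ (A *ᵥ y)) +
          (A *ᵥ (ystar - y)) ⬝ᵥ (η' - η) :=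
  fenchelYoung_loss_subgradient_general Ω hΩ A y η ystar hystar hmax
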